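/- Let a > 0, b > 0. The set {(x, y, z) ∈ ℝ³ : x > 0, y ≥ 0, z ≤ a · x · log₂(1 + b · y / x)} is a convex subset of ℝ³. -/

import Mathlib

/-!
`x * log (1 + b * y / x)` is the perspective `(x, y) ↦ x * g (y / x)` of the concave function
`g u = log (1 + b * u)`, and the perspective of a concave function is concave. The set in question
is, up to reassociating the coordinates, the hypograph of a nonnegative multiple of it.
-/

open Real Set

theorem ConcaveOn.perspective {E : Type*} [AddCommGroup E] [Module ℝ E] {s : Set E} {g : E → ℝ}
    (hg : ConcaveOn ℝ s g) :
    ConcaveOn ℝ {p : ℝ × E | 0 < p.1 ∧ p.1⁻¹ • p.2 ∈ s} (fun p => p.1 * g (p.1⁻¹ • p.2)) := by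
  -- The perspective point `X⁻¹ • (t • y₁ + u • y₂)`, `X = t * x₁ + u * x₂`, is the convex
  -- combination of the `xᵢ⁻¹ • yᵢ` with weights `t * x₁ / X` and `u * x₂ / X`.
  have key : ∀ ⦃x₁ x₂ : ℝ⦄ (y₁ y₂ : E), 0 < x₁ → 0 < x₂ → ∀ ⦃t u : ℝ⦄, 0 ≤ t → 0 ≤ u → t + u = 1 →
      0 < t * x₁ + u * x₂ ∧
      t * x₁ / (t * x₁ + u * x₂) + u * x₂ / (t * x₁ + u * x₂) = 1 ∧
      (t * x₁ + u * x₂)⁻¹ • (t • y₁ + u • y₂) =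
        (t * x₁ / (t * x₁ + u * x₂)) • (x₁⁻¹ • y₁) + (u * x₂ / (t * x₁ + u * x₂)) • (x₂⁻¹ • y₂) := by
    intro x₁ x₂ y₁ y₂ hx₁ hx₂ t u ht hu htu
    have hX : 0 < t * x₁ + u * x₂ := convex_Ioi (0 : ℝ) hx₁ hx₂ ht hu htu
    refine ⟨hX, by field_simp, ?_⟩
    simp only [smul_smul, smul_add]
    congr 2 <;> field_simp
  refine ⟨?_, ?_⟩
  · rintro ⟨x₁, y₁⟩ ⟨hx₁, hy₁⟩ ⟨x₂, y₂⟩ ⟨hx₂, hy₂⟩ t u ht hu htu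
    obtain ⟨hX, hw, hmix⟩ := key y₁ y₂ hx₁ hx₂ ht hu htu
    refine ⟨hX, ?_⟩
    simp only [Prod.smul_mk, Prod.mk_add_mk, smul_eq_mul, hmix]
    exact hg.1 hy₁ hy₂ (by positivity) (by positivity) hw
  · rintro ⟨x₁, y₁⟩ ⟨hx₁, hy₁⟩ ⟨x₂, y₂⟩ ⟨hx₂, hy₂⟩ t u ht hu htu
    obtain ⟨hX, hw, hmix⟩ := key y₁ y₂ hx₁ hx₂ ht hu htu
    simp only [Prod.smul_mk, Prod.mk_add_mk, smul_eq_mul, hmix]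
    have := hg.2 hy₁ hy₂ (by positivity : 0 ≤ t * x₁ / (t * x₁ + u * x₂))
      (by positivity : 0 ≤ u * x₂ / (t * x₁ + u * x₂)) hw
    calc t * (x₁ * g (x₁⁻¹ • y₁)) + u * (x₂ * g (x₂⁻¹ • y₂))
        = (t * x₁ + u * x₂) * ((t * x₁ / (t * x₁ + u * x₂)) • g (x₁⁻¹ • y₁)
            + (u * x₂ / (t * x₁ + u * x₂)) • g (x₂⁻¹ • y₂)) := by
          simp only [smul_eq_mul]; field_simp
      _ ≤ _ := mul_le_mul_of_nonneg_left this hX.le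

theorem concaveOn_log_one_add_mul {b : ℝ} (hb : 0 ≤ b) :
    ConcaveOn ℝ (Ici 0) (fun u => log (1 + b * u)) := by
  have h := strictConcaveOn_log_Ioi.concaveOn.comp_affineMap (AffineMap.lineMap 1 (1 + b))
  have hsub : Ici (0 : ℝ) ⊆ AffineMap.lineMap 1 (1 + b) ⁻¹' Ioi 0 := fun u (hu : 0 ≤ u) => by
    simp only [mem_preimage, AffineMap.lineMap_apply_ring', mem_Ioi]
    nlinarith
  have hf : (fun u => log (1 + b * u)) = log ∘ AffineMap.lineMap 1 (1 + b) := by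
    ext u
    simp only [Function.comp_apply, AffineMap.lineMap_apply_ring']
    ring_nf
  rw [hf]
  exact h.subset hsub (convex_Ici 0)

theorem concaveOn_mul_logb_one_add_div {a b : ℝ} (ha : 0 ≤ a) (hb : 0 ≤ b) :
    ConcaveOn ℝ {p : ℝ × ℝ | 0 < p.1 ∧ 0 ≤ p.2} (fun p => a * p.1 * logb 2 (1 + b * p.2 / p.1)) := by
  have h := ((concaveOn_log_one_add_mul hb).perspective).smul (c := a / log 2) (by positivity)
  have hs : {p : ℝ × ℝ | 0 < p.1 ∧ 0 ≤ p.2} = {p | 0 < p.1 ∧ p.1⁻¹ • p.2 ∈ Ici 0} := by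
    ext ⟨x, y⟩
    simp only [mem_ofPred_eq, mem_Ici, smul_eq_mul, and_congr_right_iff]
    intro hx
    rw [mul_nonneg_iff_of_pos_left (inv_pos.2 hx)]
  have hf : (fun p : ℝ × ℝ => a * p.1 * logb 2 (1 + b * p.2 / p.1)) =
      fun p => (a / log 2) • (p.1 * log (1 + b * p.1⁻¹ • p.2)) := by
    ext ⟨x, y⟩
    have hdiv : b * y / x = b * (x⁻¹ * y) := by ring
    simp only [logb, smul_eq_mul, hdiv]
    ring
  rwa [hs, hf]

/-- The hypograph-type feasible region of a single uplink/downlink cycle-rate constraint,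
`{(x, y, z) : x > 0, y ≥ 0, z ≤ a·x·log₂(1 + b·y/x)}`, is a convex subset of `ℝ³`. -/
theorem stmt9 (a b : ℝ) (ha : 0 < a) (hb : 0 < b) :
    Convex ℝ {q : ℝ × ℝ × ℝ |
      0 < q.1 ∧ 0 ≤ q.2.1 ∧ q.2.2 ≤ a * q.1 * Real.logb 2 (1 + b * q.2.1 / q.1)} := by
  have h := (concaveOn_mul_logb_one_add_div ha.le hb.le).convex_hypograph.linear_preimage
    (LinearEquiv.prodAssoc ℝ ℝ ℝ ℝ).symm.toLinearMap
  -- membership in this preimage unfolds to `(0 < x ∧ 0 ≤ y) ∧ z ≤ …`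
  exact (congrArg (Convex ℝ) (Set.ext fun _ => and_assoc)).mp h
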